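/- arXiv:0811.2572 — 2 statements merged into one kernel-verified Lean document; each statement's English description precedes it below -/
import Mathlib

section
/- Let G be a finite simple graph on n ≥ 1 vertices with greedy stable-set sequence S_1, …, S_k, and for each vertex v let m(v) be the unique index with v ∈ S_{m(v)}. Then for every stable set S of G, with s := |S|, the elements of S can be enumerated as v_1, v_2, …, v_s in such a way that |S_{m(v_i)}| ≥ s − i + 1 for all i ∈ {1, …, s}. -/
/-- A stable (independent) set of a simple graph, as a `Finset` of vertices. -/
def IsStableSet {V : Type*} (G : SimpleGraph V) (S : Finset V) : Prop :=
  ∀ v ∈ S, ∀ w ∈ S, ¬ G.Adj v w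

/-- `S 0, S 1, …, S (k-1)` is a greedy stable-set sequence of `G`: the `S i` are
pairwise disjoint stable sets partitioning the vertex set, and each `S i` is a
maximum-cardinality stable set among those avoiding `S 0 ∪ ⋯ ∪ S (i-1)`. -/
def IsGreedySeq {V : Type*} [Fintype V] (G : SimpleGraph V) {k : ℕ}
    (S : Fin k → Finset V) : Prop :=
  (∀ i, IsStableSet G (S i)) ∧
  (∀ i j, i ≠ j → Disjoint (S i) (S j)) ∧
  (∀ v : V, ∃ i, v ∈ S i) ∧
  (∀ i : Fin k, ∀ T : Finset V, IsStableSet G T →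
    (∀ v ∈ T, ∀ j, j < i → v ∉ S j) → T.card ≤ (S i).card)

/-- Given a greedy stable-set sequence `S` of `G` (with `m v` the index of the
class containing `v`), any stable set `T` of `G`, with `s = |T|`, can be
enumerated as `v_1, …, v_s` so that `|S (m (v_i))| ≥ s - i + 1` for all `i`
(here with `0`-indexed `i : Fin s`, so that `|S (m (v_i))| ≥ s - i`). -/
theorem stable_set_greedy_enumeration {V : Type*} [Fintype V] [DecidableEq V]
    (G : SimpleGraph V) (hn : 1 ≤ Fintype.card V)
    {k : ℕ} (S : Fin k → Finset V) (hS : IsGreedySeq G S)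
    (m : V → Fin k) (hm : ∀ v, v ∈ S (m v))
    (T : Finset V) (hT : IsStableSet G T) :
    ∃ e : Fin T.card ≃ {v : V // v ∈ T}, ∀ i : Fin T.card,
      T.card - (i : ℕ) ≤ (S (m (e i))).card := by
  classical
  obtain ⟨hstab, hdisj, hcover, hmax⟩ := hS
  set s := T.card with hs
  -- start from any equivalence and sort by the key `m`
  let e0 : {v : V // v ∈ T} ≃ Fin s := T.equivFin
  let f : Fin s → Fin k := fun i => m (e0.symm i)
  let σ := Tuple.sort f
  have hmono : Monotone (f ∘ σ) := Tuple.monotone_sort f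
  refine ⟨σ.trans e0.symm, fun i => ?_⟩
  set e : Fin s ≃ {v : V // v ∈ T} := σ.trans e0.symm with he
  have hme : ∀ j : Fin s, m ((e j : V)) = f (σ j) := fun j => rfl
  -- the tail set
  set T' : Finset V := T.filter (fun v => m ((e i : V)) ≤ m v) with hT'
  have hsub : T' ⊆ T := Finset.filter_subset _ _
  -- T' is stable
  have hT'stab : IsStableSet G T' := fun v hv w hw => hT v (hsub hv) w (hsub hw)
  -- T' avoids earlier classes
  have havoid : ∀ v ∈ T', ∀ j, j < m ((e i : V)) → v ∉ S j := by
    intro v hv j hj hvj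
    have hle : m ((e i : V)) ≤ m v := (Finset.mem_filter.mp hv).2
    have hne : j ≠ m v := fun h => absurd (h ▸ hj) (not_lt.mpr (h ▸ hle))
    exact Finset.disjoint_left.mp (hdisj j (m v) hne) hvj (hm v)
  have hcard2 : T'.card ≤ (S (m ((e i : V)))).card :=
    hmax _ _ hT'stab havoid
  -- |T'| ≥ s - i via the injection j ↦ e j on Ici i
  have hcard1 : s - (i : ℕ) ≤ T'.card := by
    have hinj : Set.InjOn (fun j : Fin s => ((e j : V))) (Finset.Ici i) := by
      intro a _ b _ hab
      exact e.injective (Subtype.ext hab)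
    have hmaps : ∀ j ∈ Finset.Ici i, ((e j : V)) ∈ T' := by
      intro j hj
      refine Finset.mem_filter.mpr ⟨(e j).2, ?_⟩
      have := hmono (Finset.mem_Ici.mp hj)
      simpa [hme] using this
    calc s - (i : ℕ) = (Finset.Ici i).card := (Fin.card_Ici i).symm
      _ ≤ T'.card := Finset.card_le_card_of_injOn _ hmaps hinj
  exact le_trans hcard1 hcard2
end

section
/- Let G be a finite simple graph on n ≥ 1 vertices with greedy stable-set sequence S_1, …, S_k, and for each vertex v let m(v) be the unique index with v ∈ S_{m(v)}. Fix δ with 0 < δ ≤ 1 and define z ∈ ℝ^V by z_v := (δ/n^δ)·|S_{m(v)}|^{δ−1}. Then for every stable set S of G, Σ_{v∈S} z_v ≤ 1. -/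
/-- Bernoulli-type key inequality: for `0 ≤ y ≤ x` and `0 < δ ≤ 1`,
`δ (x - y) x^(δ-1) ≤ x^δ - y^δ`. -/
lemma greedy_key {δ : ℝ} (hδ0 : 0 < δ) (hδ1 : δ ≤ 1) {x y : ℝ}
    (hy : 0 ≤ y) (hxy : y ≤ x) :
    δ * (x - y) * x ^ (δ - 1) ≤ x ^ δ - y ^ δ := by
  rcases eq_or_lt_of_le (hy.trans hxy) with hx0 | hx
  · have hx0' : x = 0 := hx0.symm
    have hy0 : y = 0 := le_antisymm (hx0' ▸ hxy) hy
    simp [hx0', hy0, Real.zero_rpow (ne_of_gt hδ0)]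
  · have hx' : (0:ℝ) < x := hx
    have ht0 : 0 ≤ y / x := div_nonneg hy hx'.le
    have hs : (-1 : ℝ) ≤ y / x - 1 := by linarith
    have hb := rpow_one_add_le_one_add_mul_self hs hδ0.le hδ1
    have hb' : (y / x) ^ δ ≤ 1 + δ * (y / x - 1) := by
      have : (1 : ℝ) + (y / x - 1) = y / x := by ring
      rwa [this] at hb
    have hdiv : (y / x) ^ δ = y ^ δ / x ^ δ := Real.div_rpow hy hx'.le δ
    have hxδ : (0:ℝ) < x ^ δ := Real.rpow_pos_of_pos hx' δ
    have hsplit : x ^ δ = x * x ^ (δ - 1) := by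
      have h := Real.rpow_add hx' 1 (δ - 1)
      rw [Real.rpow_one] at h
      rw [show (1:ℝ) + (δ - 1) = δ by ring] at h
      exact h
    -- from hb': y^δ ≤ x^δ + δ*(y/x - 1)*x^δ
    have h1 : y ^ δ ≤ x ^ δ + δ * (y / x - 1) * x ^ δ := by
      rw [hdiv] at hb'
      have := (div_le_iff₀ hxδ).mp hb'
      linarith [this]
    have h2 : δ * (y / x - 1) * x ^ δ = δ * (y - x) * x ^ (δ - 1) := by
      rw [hsplit]
      field_simp
    nlinarith [h1, h2]

/-- For a greedy stable-set sequence `S` of `G` and `0 < δ ≤ 1`, the vector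
`z_v = (δ/n^δ)·|S (m v)|^(δ-1)` satisfies `∑_{v ∈ T} z_v ≤ 1` for every stable
set `T` of `G`. -/
theorem greedy_z_stable_set_sum_le_one {V : Type*} [Fintype V] [DecidableEq V]
    (G : SimpleGraph V) (hn : 1 ≤ Fintype.card V)
    {k : ℕ} (S : Fin k → Finset V) (hS : IsGreedySeq G S)
    (m : V → Fin k) (hm : ∀ v, v ∈ S (m v))
    (δ : ℝ) (hδ0 : 0 < δ) (hδ1 : δ ≤ 1)
    (z : V → ℝ)
    (hz : ∀ v, z v = δ / (Fintype.card V : ℝ) ^ δ *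
      ((S (m v)).card : ℝ) ^ (δ - 1))
    (T : Finset V) (hT : IsStableSet G T) :
    ∑ v ∈ T, z v ≤ 1 := by
  classical
  obtain ⟨hstab, hdisj, hcov, hmax⟩ := hS
  set n := Fintype.card V with hn'
  have hnpos : (0:ℝ) < (n:ℝ) := by exact_mod_cast hn
  have hnδ : (0:ℝ) < (n:ℝ) ^ δ := Real.rpow_pos_of_pos hnpos δ
  set c : ℝ := δ / (n:ℝ) ^ δ with hc
  have hcpos : 0 < c := div_pos hδ0 hnδ
  -- the tail counts
  set b : ℕ → ℕ := fun i => (T.filter (fun v => i ≤ (m v : ℕ))).card with hb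
  have hb0 : b 0 = T.card := by simp [hb]
  have hbk : b k = 0 := by
    simp only [hb, Finset.card_eq_zero, Finset.filter_eq_empty_iff]
    intro v _
    exact not_le.mpr (m v).isLt
  have hbmono : ∀ i, b (i+1) ≤ b i := by
    intro i
    apply Finset.card_le_card
    intro v hv
    rw [Finset.mem_filter] at hv ⊢
    exact ⟨hv.1, by omega⟩
  -- b i ≤ |S i| by the greedy maximality
  have hba : ∀ i : Fin k, b i ≤ (S i).card := by
    intro i
    apply hmax i _ (fun v hv w hw => hT v (Finset.mem_filter.mp hv).1 w
      (Finset.mem_filter.mp hw).1)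
    intro v hv j hj hvS
    have hvi : (i : ℕ) ≤ (m v : ℕ) := (Finset.mem_filter.mp hv).2
    have hne : j ≠ m v := by
      intro h; subst h
      exact absurd (lt_of_lt_of_le hj (by exact_mod_cast hvi)) (lt_irrefl _)
    exact (Finset.disjoint_left.mp (hdisj j (m v) hne)) hvS (hm v)
  have hbv : ∀ v ∈ T, 1 ≤ b (m v) := by
    intro v hv
    have : v ∈ T.filter (fun w => ((m v : ℕ)) ≤ (m w : ℕ)) :=
      Finset.mem_filter.mpr ⟨hv, le_refl _⟩
    exact Finset.card_pos.mpr ⟨v, this⟩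
  -- step equality: fiber card + next tail = tail
  have hstep : ∀ i : ℕ, (T.filter (fun v => (m v : ℕ) = i)).card + b (i+1) = b i := by
    intro i
    rw [hb]
    rw [← Finset.card_union_of_disjoint]
    · congr 1
      ext v
      simp only [Finset.mem_union, Finset.mem_filter]
      constructor
      · rintro (⟨hv, h⟩ | ⟨hv, h⟩) <;> exact ⟨hv, by omega⟩
      · rintro ⟨hv, h⟩
        rcases eq_or_lt_of_le h with h' | h'
        · exact Or.inl ⟨hv, h'.symm⟩
        · exact Or.inr ⟨hv, h'⟩
    · rw [Finset.disjoint_left]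
      intro v hv hv'
      have h1 := (Finset.mem_filter.mp hv).2
      have h2 := (Finset.mem_filter.mp hv').2
      omega
  -- per-vertex bound
  have hzb : ∀ v ∈ T, z v ≤ c * (b (m v) : ℝ) ^ (δ - 1) := by
    intro v hv
    rw [hz v]
    apply mul_le_mul_of_nonneg_left _ hcpos.le
    apply Real.rpow_le_rpow_of_nonpos
    · exact_mod_cast hbv v hv
    · exact_mod_cast hba (m v)
    · linarith
  have h1 : ∑ v ∈ T, z v ≤ c * ∑ v ∈ T, ((b (m v) : ℝ)) ^ (δ - 1) := by
    rw [Finset.mul_sum]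
    exact Finset.sum_le_sum hzb
  -- group by fibers
  have h2 : ∑ v ∈ T, ((b (m v) : ℝ)) ^ (δ - 1) =
      ∑ i : Fin k, ((T.filter (fun v => m v = i)).card : ℝ) * ((b i : ℝ)) ^ (δ - 1) := by
    rw [← Finset.sum_fiberwise' T m (fun i => ((b i : ℝ)) ^ (δ - 1))]
    congr 1
    ext i
    rw [Finset.sum_const, nsmul_eq_mul]
  have hfib : ∀ i : Fin k, (T.filter (fun v => m v = i)).card =
      (T.filter (fun v => (m v : ℕ) = (i : ℕ))).card := by
    intro i
    congr 1
    apply Finset.filter_congr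
    intro v _
    simp [Fin.ext_iff]
  -- convert to a range sum
  have h3 : ∑ i : Fin k, ((T.filter (fun v => m v = i)).card : ℝ) * ((b i : ℝ)) ^ (δ - 1) =
      ∑ i ∈ Finset.range k, ((b i - b (i+1) : ℕ) : ℝ) * ((b i : ℝ)) ^ (δ - 1) := by
    rw [Finset.sum_range fun i => ((b i - b (i+1) : ℕ) : ℝ) * ((b i : ℝ)) ^ (δ - 1)]
    apply Finset.sum_congr rfl
    intro i _
    congr 2
    rw [hfib i]
    have := hstep (i : ℕ)
    omega
  -- telescoping bound
  have h4 : δ * ∑ i ∈ Finset.range k, ((b i - b (i+1) : ℕ) : ℝ) * ((b i : ℝ)) ^ (δ - 1)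
      ≤ (n : ℝ) ^ δ := by
    rw [Finset.mul_sum]
    calc ∑ i ∈ Finset.range k, δ * (((b i - b (i+1) : ℕ) : ℝ) * ((b i : ℝ)) ^ (δ - 1))
        ≤ ∑ i ∈ Finset.range k, (((b i : ℝ)) ^ δ - ((b (i+1) : ℝ)) ^ δ) := by
          apply Finset.sum_le_sum
          intro i _
          have hcast : ((b i - b (i+1) : ℕ) : ℝ) = (b i : ℝ) - (b (i+1) : ℝ) := by
            have := hbmono i
            push_cast [Nat.cast_sub this]
            ring
          rw [hcast, ← mul_assoc]
          exact greedy_key hδ0 hδ1 (by positivity) (by exact_mod_cast hbmono i)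
      _ = ((b 0 : ℝ)) ^ δ - ((b k : ℝ)) ^ δ := Finset.sum_range_sub' _ k
      _ ≤ (n : ℝ) ^ δ := by
          rw [hbk, hb0]
          have hTn : (T.card : ℝ) ≤ (n : ℝ) := by
            exact_mod_cast Finset.card_le_card (Finset.subset_univ T) |>.trans
              (le_of_eq (Finset.card_univ))
          have := Real.rpow_le_rpow (by positivity : (0:ℝ) ≤ (T.card:ℝ)) hTn hδ0.le
          simp only [Nat.cast_zero, Real.zero_rpow (ne_of_gt hδ0)]
          linarith
  -- put it all together
  have hB : ∑ v ∈ T, ((b (m v) : ℝ)) ^ (δ - 1) ≤ (n : ℝ) ^ δ / δ := by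
    rw [h2, h3]
    rw [le_div_iff₀ hδ0]
    linarith [h4]
  calc ∑ v ∈ T, z v ≤ c * ∑ v ∈ T, ((b (m v) : ℝ)) ^ (δ - 1) := h1
    _ ≤ c * ((n : ℝ) ^ δ / δ) := mul_le_mul_of_nonneg_left hB hcpos.le
    _ = 1 := by
        rw [hc]
        field_simp
end
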